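/- arXiv:hep-th/0104018 — 3 statements merged into one kernel-verified Lean document; each statement's English description precedes it below -/
import Mathlib

section
/- For 0 < |x| < 1 and z = ζ² ≠ 0, the function g(z) defined by the double infinite product satisfies ζ g(z)/g(z⁻¹) = κ(ζ), where κ(ζ) = ζ (x⁴z; x⁴)∞ (x²z⁻¹; x⁴)∞ / ((x⁴z⁻¹; x⁴)∞ (x²z; x⁴)∞). -/
/-- Infinite product `(a; p)∞ = ∏_{k ≥ 0} (1 − a p^k)`. -/
noncomputable def poch (a p : ℂ) : ℂ := ∏' k : ℕ, (1 - a * p ^ k)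

/-- Double infinite product `(a; p₁, p₂)∞`. -/
noncomputable def dpoch (a p₁ p₂ : ℂ) : ℂ := ∏' k : ℕ × ℕ, (1 - a * p₁ ^ k.1 * p₂ ^ k.2)

/-- The function `g(z)`. -/
noncomputable def gfun (x z : ℂ) : ℂ :=
  dpoch (x^6 * z) (x^4) (x^4) * dpoch (x^2 * z⁻¹) (x^4) (x^4) /
    (dpoch (x^8 * z) (x^4) (x^4) * dpoch (x^4 * z⁻¹) (x^4) (x^4))

/-- The normalization factor `κ(ζ)`, `z = ζ²`. -/
noncomputable def kappa (x ζ : ℂ) : ℂ :=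
  ζ * (poch (x^4 * ζ^2) (x^4) * poch (x^2 * (ζ^2)⁻¹) (x^4)) /
    (poch (x^4 * (ζ^2)⁻¹) (x^4) * poch (x^2 * ζ^2) (x^4))

/-!
Peeling off the row `k₁ = 0` gives `(a; p, p)∞ = (a; p)∞ (ap; p, p)∞`. Applied to the two
factors of `g(z)` that involve `z⁻¹`, this writes `g(z) = S(z) (x²z⁻¹; x⁴)∞ / (x⁴z⁻¹; x⁴)∞` with
`S = gSym x` symmetric under `z ↦ z⁻¹`, so `S` cancels from `g(z)/g(z⁻¹)` and what remains is
`κ(ζ)/ζ`. When `S(z) = 0` both sides vanish: a zero of `S` is a zero of one of the four single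
products in `κ`.
-/

section Products

variable {ι : Type*} {u : ι → ℂ}

theorem multipliable_one_sub_of_summable_norm (hu : Summable (‖u ·‖)) :
    Multipliable fun i => 1 - u i := by
  simpa only [sub_eq_add_neg] using
    multipliable_one_add_of_summable (f := fun i => -u i) (by simpa only [norm_neg] using hu)

theorem tprod_one_sub_eq_zero_iff (hu : Summable (‖u ·‖)) :
    ∏' i, (1 - u i) = 0 ↔ ∃ i, u i = 1 := by
  refine ⟨fun h => ?_, fun ⟨i, hi⟩ => tprod_of_exists_eq_zero ⟨i, by rw [hi, sub_self]⟩⟩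
  by_contra! hne
  refine tprod_one_add_ne_zero_of_summable (f := fun i => -u i) (fun i => ?_)
    (by simpa only [norm_neg] using hu) (by simpa only [← sub_eq_add_neg] using h)
  rw [← sub_eq_add_neg, sub_ne_zero]
  exact (hne i).symm

end Products

section Pochhammer

variable {a p q : ℂ}

theorem summable_norm_mul_pow (a : ℂ) (hp : ‖p‖ < 1) : Summable fun k : ℕ => ‖a * p ^ k‖ := by
  simpa only [norm_mul, norm_pow] using
    (summable_geometric_of_lt_one (norm_nonneg p) hp).mul_left ‖a‖

theorem summable_norm_mul_pow_mul_pow (a : ℂ) (hp : ‖p‖ < 1) (hq : ‖q‖ < 1) :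
    Summable fun k : ℕ × ℕ => ‖a * p ^ k.1 * q ^ k.2‖ := by
  simpa only [norm_mul, norm_pow, mul_assoc] using
    ((summable_geometric_of_lt_one (norm_nonneg p) hp).mul_of_nonneg
      (summable_geometric_of_lt_one (norm_nonneg q) hq) (fun _ => by positivity)
      (fun _ => by positivity)).mul_left ‖a‖

theorem poch_eq_zero_iff (hp : ‖p‖ < 1) : poch a p = 0 ↔ ∃ k : ℕ, a * p ^ k = 1 :=
  tprod_one_sub_eq_zero_iff (summable_norm_mul_pow a hp)

theorem dpoch_eq_zero_iff (hp : ‖p‖ < 1) (hq : ‖q‖ < 1) :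
    dpoch a p q = 0 ↔ ∃ k : ℕ × ℕ, a * p ^ k.1 * q ^ k.2 = 1 :=
  tprod_one_sub_eq_zero_iff (summable_norm_mul_pow_mul_pow a hp hq)

theorem poch_eq_zero_of_dpoch_mul_eq_zero (hp : ‖p‖ < 1) (h : dpoch (a * p) p p = 0) :
    poch a p = 0 := by
  obtain ⟨⟨i, j⟩, hij⟩ := (dpoch_eq_zero_iff hp hp).1 h
  exact (poch_eq_zero_iff hp).2 ⟨i + j + 1, by rw [← hij]; ring⟩

theorem dpoch_eq_poch_mul_dpoch (hp : ‖p‖ < 1) (hq : ‖q‖ < 1) :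
    dpoch a p q = poch a q * dpoch (a * p) p q := by
  have rows : ∀ b : ℂ, HasProd (fun i : ℕ => ∏' j : ℕ, (1 - b * p ^ i * q ^ j)) (dpoch b p q) :=
    fun b => (multipliable_one_sub_of_summable_norm
      (summable_norm_mul_pow_mul_pow b hp hq)).hasProd.prod_fiberwise fun i =>
        (multipliable_one_sub_of_summable_norm (summable_norm_mul_pow (b * p ^ i) hq)).hasProd
  have shifted : HasProd (fun i : ℕ => ∏' j : ℕ, (1 - a * p ^ (i + 1) * q ^ j))
      (dpoch (a * p) p q) := by
    simpa only [pow_succ', ← mul_assoc] using rows (a * p)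
  rw [← (rows a).tprod_eq, tprod_eq_zero_mul' shifted.multipliable, shifted.tprod_eq]
  simp only [poch, pow_zero, mul_one]

end Pochhammer

section GFunction

variable {x : ℂ}

noncomputable def gSym (x z : ℂ) : ℂ :=
  dpoch (x^6 * z) (x^4) (x^4) * dpoch (x^6 * z⁻¹) (x^4) (x^4) /
    (dpoch (x^8 * z) (x^4) (x^4) * dpoch (x^8 * z⁻¹) (x^4) (x^4))

theorem gSym_inv (z : ℂ) : gSym x z⁻¹ = gSym x z := by
  rw [gSym, gSym, inv_inv, mul_comm (dpoch (x^6 * z⁻¹) _ _), mul_comm (dpoch (x^8 * z⁻¹) _ _)]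

theorem gfun_eq_gSym_mul (hx : ‖x ^ 4‖ < 1) (z : ℂ) :
    gfun x z = gSym x z * (poch (x^2 * z⁻¹) (x^4) / poch (x^4 * z⁻¹) (x^4)) := by
  rw [gfun, gSym, dpoch_eq_poch_mul_dpoch hx hx (a := x^2 * z⁻¹),
    dpoch_eq_poch_mul_dpoch hx hx (a := x^4 * z⁻¹)]
  ring_nf

theorem kappa_eq_zero_of_gSym_eq_zero (hx : ‖x ^ 4‖ < 1) {ζ : ℂ} (h : gSym x (ζ^2) = 0) :
    kappa x ζ = 0 := by
  have h6 : ∀ w : ℂ, x^6 * w = x^2 * w * x^4 := fun w => by ring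
  have h8 : ∀ w : ℂ, x^8 * w = x^4 * w * x^4 := fun w => by ring
  rw [gSym, h6, h6, h8, h8] at h
  simp only [div_eq_zero_iff, mul_eq_zero] at h
  rcases h with (h | h) | (h | h) <;>
    simp [kappa, poch_eq_zero_of_dpoch_mul_eq_zero hx h]

end GFunction

theorem kappa_eq_g_ratio_general (x ζ : ℂ) (hx : ‖x‖ < 1) :
    ζ * gfun x (ζ^2) / gfun x ((ζ^2)⁻¹) = kappa x ζ := by
  have hx4 : ‖x ^ 4‖ < 1 := by
    rw [norm_pow]
    exact pow_lt_one₀ (norm_nonneg x) hx (by norm_num)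
  rw [gfun_eq_gSym_mul hx4, gfun_eq_gSym_mul hx4, gSym_inv, inv_inv]
  rcases eq_or_ne (gSym x (ζ^2)) 0 with h | h
  · simp [h, kappa_eq_zero_of_gSym_eq_zero hx4 h]
  · rw [mul_div_assoc, mul_div_mul_left _ _ h, div_div_div_eq, kappa]
    ring

/-- `ζ g(z)/g(z⁻¹) = κ(ζ)` with `z = ζ²`. -/
theorem kappa_eq_g_ratio (x ζ : ℂ) (hx0 : x ≠ 0) (hx : ‖x‖ < 1) (hζ : ζ ≠ 0) :
    ζ * gfun x (ζ^2) / gfun x ((ζ^2)⁻¹) = kappa x ζ :=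
  kappa_eq_g_ratio_general x ζ hx
end

section
/- With ψ(z) = 1/((xz; x⁴)∞ (xz⁻¹; x⁴)∞), the identity g(z) g(x²z) ψ(xz) = 1/(1 − x²z) holds for all z ≠ 0 in the region of convergence where all factors are nonzero. -/
/-- The kernel `ψ(z) = 1/((xz; x⁴)∞ (xz⁻¹; x⁴)∞)`. -/
noncomputable def psi (x z : ℂ) : ℂ := (poch (x * z) (x^4) * poch (x * z⁻¹) (x^4))⁻¹

namespace QPochhammer

variable {a p q : ℂ}

lemma summable_norm_mul_pow (a : ℂ) (hp : ‖p‖ < 1) : Summable fun k : ℕ => ‖a * p ^ k‖ := by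
  simpa only [norm_mul, norm_pow] using
    (summable_geometric_of_lt_one (norm_nonneg p) hp).mul_left ‖a‖

lemma summable_norm_mul_pow_mul_pow (a : ℂ) (hp : ‖p‖ < 1) (hq : ‖q‖ < 1) :
    Summable fun k : ℕ × ℕ => ‖a * p ^ k.1 * q ^ k.2‖ :=
  (summable_norm_mul_pow a hp).mul_norm (by simpa using summable_norm_mul_pow 1 hq)

lemma multipliable_poch (a : ℂ) (hp : ‖p‖ < 1) : Multipliable fun k : ℕ => 1 - a * p ^ k := by
  simpa only [sub_eq_add_neg] using
    multipliable_one_add_of_summable (by simpa only [norm_neg] using summable_norm_mul_pow a hp)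

lemma multipliable_dpoch (a : ℂ) (hp : ‖p‖ < 1) (hq : ‖q‖ < 1) :
    Multipliable fun k : ℕ × ℕ => 1 - a * p ^ k.1 * q ^ k.2 := by
  simpa only [sub_eq_add_neg] using multipliable_one_add_of_summable
    (by simpa only [norm_neg] using summable_norm_mul_pow_mul_pow a hp hq)

lemma poch_ne_zero (hp : ‖p‖ < 1) (h : ∀ k : ℕ, 1 - a * p ^ k ≠ 0) : poch a p ≠ 0 := by
  simp only [poch, sub_eq_add_neg] at h ⊢
  exact tprod_one_add_ne_zero_of_summable h
    (by simpa only [norm_neg] using summable_norm_mul_pow a hp)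

lemma dpoch_ne_zero (hp : ‖p‖ < 1) (hq : ‖q‖ < 1)
    (h : ∀ k : ℕ × ℕ, 1 - a * p ^ k.1 * q ^ k.2 ≠ 0) : dpoch a p q ≠ 0 := by
  simp only [dpoch, sub_eq_add_neg] at h ⊢
  exact tprod_one_add_ne_zero_of_summable h
    (by simpa only [norm_neg] using summable_norm_mul_pow_mul_pow a hp hq)

lemma dpoch_self_ne_zero (hp : ‖p‖ < 1) (h : ∀ k : ℕ, 1 - a * p ^ k ≠ 0) : dpoch a p p ≠ 0 :=
  dpoch_ne_zero hp hp fun k => by simpa only [mul_assoc, ← pow_add] using h (k.1 + k.2)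

lemma poch_eq_one_sub_mul (hp : ‖p‖ < 1) : poch a p = (1 - a) * poch (a * p) p := by
  have hshift : (fun k : ℕ => 1 - a * p ^ (k + 1)) = fun k => 1 - a * p * p ^ k := by
    ext k; ring
  rw [poch, tprod_eq_zero_mul' (by simpa only [hshift] using multipliable_poch (a * p) hp),
    hshift, pow_zero, mul_one, poch]

lemma hasProd_poch_mul_pow (hp : ‖p‖ < 1) (hq : ‖q‖ < 1) :
    HasProd (fun i : ℕ => poch (a * p ^ i) q) (dpoch a p q) := by
  have hrow (i : ℕ) : HasProd (fun k : ℕ => 1 - a * p ^ i * q ^ k) (poch (a * p ^ i) q) :=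
    (multipliable_poch _ hq).hasProd
  have hall : HasProd (fun k : ℕ × ℕ => 1 - a * p ^ k.1 * q ^ k.2) (dpoch a p q) :=
    (multipliable_dpoch a hp hq).hasProd
  exact hall.prod_fiberwise hrow

lemma dpoch_eq_poch_mul (hp : ‖p‖ < 1) (hq : ‖q‖ < 1) :
    dpoch a p q = poch a q * dpoch (a * p) p q := by
  have hshift : (fun i : ℕ => poch (a * p ^ (i + 1)) q) = fun i => poch (a * p * p ^ i) q := by
    ext i; ring_nf
  have hrest := hasProd_poch_mul_pow (a := a * p) hp hq
  rw [← (hasProd_poch_mul_pow hp hq).tprod_eq, tprod_eq_zero_mul' (hshift ▸ hrest.multipliable),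
    hshift, hrest.tprod_eq, pow_zero, mul_one]

end QPochhammer

lemma gfun_sq_mul {x : ℂ} (hx0 : x ≠ 0) (z : ℂ) :
    gfun x (x ^ 2 * z) = dpoch (x ^ 8 * z) (x ^ 4) (x ^ 4) * dpoch z⁻¹ (x ^ 4) (x ^ 4) /
      (dpoch (x ^ 10 * z) (x ^ 4) (x ^ 4) * dpoch (x ^ 2 * z⁻¹) (x ^ 4) (x ^ 4)) := by
  rw [gfun, show x ^ 6 * (x ^ 2 * z) = x ^ 8 * z by ring,
    show x ^ 2 * (x ^ 2 * z)⁻¹ = z⁻¹ by field_simp,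
    show x ^ 8 * (x ^ 2 * z) = x ^ 10 * z by ring,
    show x ^ 4 * (x ^ 2 * z)⁻¹ = x ^ 2 * z⁻¹ by field_simp]

lemma psi_self_mul {x : ℂ} (hx0 : x ≠ 0) (z : ℂ) :
    psi x (x * z) = (poch (x ^ 2 * z) (x ^ 4) * poch z⁻¹ (x ^ 4))⁻¹ := by
  rw [psi, show x * (x * z) = x ^ 2 * z by ring, show x * (x * z)⁻¹ = z⁻¹ by field_simp]

open QPochhammer in
theorem g_g_psi_general (x z : ℂ) (hx0 : x ≠ 0) (hx : ‖x‖ < 1)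
    (hfac : ∀ a ∈ ({x^6 * z, x^2 * z⁻¹, x^8 * z, x^4 * z⁻¹, x^10 * z, z⁻¹, x^2 * z} : Set ℂ),
      ∀ k : ℕ, 1 - a * (x^4) ^ k ≠ 0) :
    gfun x z * gfun x (x^2 * z) * psi x (x * z) = 1 / (1 - x^2 * z) := by
  have hp : ‖x ^ 4‖ < 1 := by
    simpa only [norm_pow] using pow_lt_one₀ (norm_nonneg x) hx four_ne_zero
  simp only [Set.mem_insert_iff, Set.mem_singleton_iff, forall_eq_or_imp, forall_eq] at hfac
  obtain ⟨h6, h2', h8, h4', h10, h0', h2⟩ := hfac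
  have h2z : (1 : ℂ) - x ^ 2 * z ≠ 0 := by simpa using h2 0
  have hP6 := poch_ne_zero hp h6
  have hP0 := poch_ne_zero hp h0'
  have hD2 := dpoch_self_ne_zero hp h2'
  have hD8 := dpoch_self_ne_zero hp h8
  have hD4 := dpoch_self_ne_zero hp h4'
  have hD10 := dpoch_self_ne_zero hp h10
  rw [gfun, gfun_sq_mul hx0, psi_self_mul hx0,
    dpoch_eq_poch_mul (a := x ^ 6 * z) hp hp, dpoch_eq_poch_mul (a := z⁻¹) hp hp,
    poch_eq_one_sub_mul (a := x ^ 2 * z) hp,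
    show x ^ 6 * z * x ^ 4 = x ^ 10 * z by ring, show z⁻¹ * x ^ 4 = x ^ 4 * z⁻¹ by ring,
    show x ^ 2 * z * x ^ 4 = x ^ 6 * z by ring]
  -- hide the arguments, which `field_simp` would otherwise rewrite into a different normal form
  generalize poch (x ^ 6 * z) (x ^ 4) = P6 at *
  generalize poch z⁻¹ (x ^ 4) = P0 at *
  generalize dpoch (x ^ 2 * z⁻¹) (x ^ 4) (x ^ 4) = D2 at *
  generalize dpoch (x ^ 8 * z) (x ^ 4) (x ^ 4) = D8 at *
  generalize dpoch (x ^ 4 * z⁻¹) (x ^ 4) (x ^ 4) = D4 at *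
  generalize dpoch (x ^ 10 * z) (x ^ 4) (x ^ 4) = D10 at *
  field_simp

/-- The identity `g(z) g(x²z) ψ(xz) = 1/(1 − x²z)`. -/
theorem g_g_psi (x z : ℂ) (hx0 : x ≠ 0) (hx : ‖x‖ < 1) (hz : z ≠ 0)
    (hfac : ∀ a ∈ ({x^6 * z, x^2 * z⁻¹, x^8 * z, x^4 * z⁻¹, x^10 * z, z⁻¹, x^2 * z} : Set ℂ),
      ∀ k : ℕ, 1 - a * (x^4) ^ k ≠ 0) :
    gfun x z * gfun x (x^2 * z) * psi x (x * z) = 1 / (1 - x^2 * z) :=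
  g_g_psi_general x z hx0 hx hfac
end

section
/- The function θ⁽ⁿ⁾_σ(w|ζ) = Θ_{x²}(−σ ∏_a w_a⁻¹ ∏_j ζ_j) ∏_j z_j⁻ⁿ ∏_{a<b} w_a⁻¹ Θ_{x²}(w_a/w_b) is antisymmetric in the variables w: swapping w_a and w_b (a < b) negates its value, for all nonzero w₁,…,w_n. -/
/-- Theta function `Θ_p(z) = (z; p)∞ (p z⁻¹; p)∞ (p; p)∞`. -/
noncomputable def theta (p z : ℂ) : ℂ := poch z p * poch (p * z⁻¹) p * poch p p

/-- The candidate theta function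
`θ⁽ⁿ⁾_σ(w|ζ) = Θ_{x²}(−σ ∏_a w_a⁻¹ ∏_j ζ_j) ∏_j z_j⁻ⁿ ∏_{a<b} w_a⁻¹ Θ_{x²}(w_a/w_b)`,
with `z_j = ζ_j²`. -/
noncomputable def thetaSol (n : ℕ) (x σ : ℂ) (w : Fin n → ℂ) (ζ : Fin (2 * n) → ℂ) : ℂ :=
  theta (x^2) (-σ * (∏ a, (w a)⁻¹) * ∏ j, ζ j) *
  (∏ j, ((ζ j)^2)⁻¹ ^ n) *
  ∏ p ∈ Finset.univ.filter (fun p : Fin n × Fin n => p.1 < p.2),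
    (w p.1)⁻¹ * theta (x^2) (w p.1 / w p.2)

/-!
The product `∏_{a<b} w_a⁻¹ Θ(w_a/w_b)` is a product of `f(w_a, w_b)` over pairs `a < b`
for the function `f(u, v) = u⁻¹ Θ(u/v)`, which the inversion formula `Θ(z⁻¹) = −z⁻¹ Θ(z)` makes
antisymmetric. Permuting the `w` therefore multiplies that product by the sign of the
permutation, while the first factor only sees the permutation-invariant `∏_a w_a⁻¹`.
-/

open Finset

lemma multipliable_one_sub_mul_pow (a : ℂ) {p : ℂ} (hp : ‖p‖ < 1) :
    Multipliable fun k : ℕ => 1 - a * p ^ k := by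
  simpa [sub_eq_add_neg] using Complex.multipliable_one_add_of_summable
    ((summable_geometric_of_norm_lt_one hp).mul_left a).neg

lemma poch_eq_one_sub_mul_poch (a : ℂ) {p : ℂ} (hp : ‖p‖ < 1) :
    poch a p = (1 - a) * poch (a * p) p := by
  have hshift : (fun k : ℕ => 1 - a * p ^ (k + 1)) = fun k => 1 - a * p * p ^ k := by
    funext k; ring
  have h := tprod_eq_zero_mul' (f := fun k : ℕ => 1 - a * p ^ k)
    (hshift ▸ multipliable_one_sub_mul_pow (a * p) hp)
  rw [poch, h, hshift, poch, pow_zero, mul_one]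

lemma theta_inv {p z : ℂ} (hp : ‖p‖ < 1) (hz : z ≠ 0) :
    theta p z⁻¹ = -z⁻¹ * theta p z := by
  rw [theta, theta, inv_inv, poch_eq_one_sub_mul_poch z⁻¹ hp, poch_eq_one_sub_mul_poch z hp,
    mul_comm z⁻¹ p, mul_comm z p]
  have h : (1 : ℂ) - z⁻¹ = -z⁻¹ * (1 - z) := by field_simp; ring
  rw [h]
  ring

lemma inv_mul_theta_div_antisymm {p : ℂ} (hp : ‖p‖ < 1) {u v : ℂ}
    (hu : u ≠ 0) (hv : v ≠ 0) :
    u⁻¹ * theta p (u / v) = -(v⁻¹ * theta p (v / u)) := by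
  rw [← inv_div, theta_inv hp (div_ne_zero hv hu)]
  field_simp

lemma prod_filter_lt_eq_prod_prod_Ioi {α M : Type*} [Fintype α] [LinearOrder α]
    [LocallyFiniteOrderTop α] [CommMonoid M] (f : α → α → M) :
    ∏ p ∈ univ.filter (fun p : α × α => p.1 < p.2), f p.1 p.2 =
      ∏ i, ∏ j ∈ Ioi i, f i j := by
  rw [prod_filter, Fintype.prod_prod_type]
  refine prod_congr rfl fun i _ => ?_
  rw [← prod_filter]
  congr 1
  ext j
  simp

lemma prod_pairs_comp_swap {n : ℕ} {R : Type*} [CommRing R] {f : Fin n → Fin n → R}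
    (hf : ∀ i j, f i j = -f j i) {a b : Fin n} (hab : a ≠ b) :
    ∏ p ∈ univ.filter (fun p : Fin n × Fin n => p.1 < p.2),
        f (Equiv.swap a b p.1) (Equiv.swap a b p.2) =
      -∏ p ∈ univ.filter (fun p : Fin n × Fin n => p.1 < p.2), f p.1 p.2 := by
  rw [prod_filter_lt_eq_prod_prod_Ioi (fun i j => f (Equiv.swap a b i) (Equiv.swap a b j)),
    prod_filter_lt_eq_prod_prod_Ioi f, Equiv.Perm.prod_Ioi_comp_eq_sign_mul_prod _ hf,
    Equiv.Perm.sign_swap hab]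
  simp

theorem thetaSol_antisymm_general (n : ℕ) (x σ : ℂ)
    (hx : ‖x‖ < 1)
    (w : Fin n → ℂ) (ζ : Fin (2 * n) → ℂ)
    (hw : ∀ a, w a ≠ 0)
    (a b : Fin n) (hab : a < b) :
    thetaSol n x σ (w ∘ Equiv.swap a b) ζ = -thetaSol n x σ w ζ := by
  have hx2 : ‖x ^ 2‖ < 1 := by
    rw [norm_pow]
    exact pow_lt_one₀ (norm_nonneg x) hx two_ne_zero
  have hprod : ∏ c, ((w ∘ Equiv.swap a b) c)⁻¹ = ∏ c, (w c)⁻¹ :=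
    Equiv.prod_comp (Equiv.swap a b) fun c => (w c)⁻¹
  have hpairs := prod_pairs_comp_swap
    (f := fun i j => (w i)⁻¹ * theta (x ^ 2) (w i / w j))
    (fun i j => inv_mul_theta_div_antisymm hx2 (hw i) (hw j)) hab.ne
  rw [thetaSol, thetaSol, hprod]
  simp only [Function.comp_apply, hpairs]
  ring

/-- Antisymmetry of `θ⁽ⁿ⁾_σ` in the `w`-variables: swapping `w_a` and `w_b`
(`a < b`) negates the value. -/
theorem thetaSol_antisymm (n : ℕ) (hn : 2 ≤ n) (x σ : ℂ)
    (hx0 : x ≠ 0) (hx : ‖x‖ < 1) (hσ : σ = 1 ∨ σ = -1)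
    (w : Fin n → ℂ) (ζ : Fin (2 * n) → ℂ)
    (hw : ∀ a, w a ≠ 0) (hζ : ∀ j, ζ j ≠ 0)
    (a b : Fin n) (hab : a < b) :
    thetaSol n x σ (w ∘ Equiv.swap a b) ζ = -thetaSol n x σ w ζ :=
  thetaSol_antisymm_general n x σ hx w ζ hw a b hab
end
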